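/- Let p_1, …, p_n be positive integers with h = gcd(p_1, …, p_n). Then for every integer y ≥ (min_i p_i/h − 1)(max_i p_i/h − 1), there exist nonnegative integers y_1, …, y_n such that y·h = Σ_{i=1}^n y_i p_i. -/
import Mathlib

lemma finset_bezout {ι : Type*} [DecidableEq ι] (s : Finset ι) (q : ι → ℕ) :
    ∃ x : ι → ℤ, ∑ i ∈ s, x i * q i = ((s.gcd q : ℕ) : ℤ) := by
  induction s using Finset.induction_on with
  | empty => exact ⟨0, by simp⟩
  | @insert a s hi ih =>
    obtain ⟨x, hx⟩ := ih
    refine ⟨fun j => if j = a then Nat.gcdA (q a) (s.gcd q) else Nat.gcdB (q a) (s.gcd q) * x j, ?_⟩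
    rw [Finset.sum_insert hi, Finset.gcd_insert]
    have hrest : ∑ j ∈ s, (if j = a then Nat.gcdA (q a) (s.gcd q)
        else Nat.gcdB (q a) (s.gcd q) * x j) * (q j : ℤ)
        = Nat.gcdB (q a) (s.gcd q) * ∑ j ∈ s, x j * (q j : ℤ) := by
      rw [Finset.mul_sum]
      refine Finset.sum_congr rfl fun j hj => ?_
      rw [if_neg (by rintro rfl; exact hi hj)]; ring
    rw [hrest, hx]
    simp only [if_pos rfl]
    have hb := Nat.gcd_eq_gcd_ab (q a) (s.gcd q)
    have hg : gcd (q a) (s.gcd q) = Nat.gcd (q a) (s.gcd q) := rfl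
    rw [hg, hb]
    simp only [if_true]
    ring


open Finset in
lemma exists_small_residue {n a : ℕ} [NeZero a] (q : Fin n → ℕ)
    (hone : ∃ c₀ : Fin n → ℕ, ((∑ i, c₀ i * q i : ℕ) : ZMod a) = 1) (r : ZMod a) :
    ∃ c : Fin n → ℕ, (∑ i, c i) ≤ a - 1 ∧ ((∑ i, c i * q i : ℕ) : ZMod a) = r := by
  classical
  set f : ℕ → Finset (ZMod a) := fun k => Finset.univ.filter
    (fun r => ∃ c : Fin n → ℕ, (∑ i, c i) ≤ k ∧ ((∑ i, c i * q i : ℕ) : ZMod a) = r) with hf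
  have hmem : ∀ k r, r ∈ f k ↔ ∃ c : Fin n → ℕ,
      (∑ i, c i) ≤ k ∧ ((∑ i, c i * q i : ℕ) : ZMod a) = r := by
    intro k r; simp [hf]
  have hmono : ∀ k, f k ⊆ f (k + 1) := by
    intro k r hr
    rw [hmem] at hr ⊢
    obtain ⟨c, h1, h2⟩ := hr
    exact ⟨c, h1.trans (Nat.le_succ k), h2⟩
  have h0 : (0 : ZMod a) ∈ f 0 := by
    rw [hmem]; exact ⟨0, by simp, by simp⟩
  -- if f stabilizes at k, then f k = univ
  have hstab : ∀ k, f (k + 1) = f k → f k = Finset.univ := by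
    intro k hk
    have hclosed : ∀ r ∈ f k, ∀ j, r + (q j : ZMod a) ∈ f k := by
      intro r hr j
      rw [← hk, hmem]
      rw [hmem] at hr
      obtain ⟨c, h1, h2⟩ := hr
      refine ⟨fun i => c i + if i = j then 1 else 0, ?_, ?_⟩
      · calc (∑ i, (c i + if i = j then 1 else 0))
            = (∑ i, c i) + ∑ i, (if i = j then 1 else 0) := by rw [Finset.sum_add_distrib]
          _ ≤ k + 1 := by simp; omega
      · have : (∑ i, (c i + if i = j then 1 else 0) * q i)
            = (∑ i, c i * q i) + q j := by
          simp [add_mul, Finset.sum_add_distrib, ite_mul]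
        rw [this, Nat.cast_add, h2]
    -- everything of the form cast of a combination is in f k
    have hall : ∀ m (c : Fin n → ℕ), (∑ i, c i) = m → ((∑ i, c i * q i : ℕ) : ZMod a) ∈ f k := by
      intro m
      induction m with
      | zero => intro c hc
                have : ∀ i, c i = 0 := by
                  intro i
                  have := Finset.sum_eq_zero_iff.mp hc
                  exact this i (Finset.mem_univ i)
                simp only [this, zero_mul, Finset.sum_const_zero, Nat.cast_zero]
                rw [hmem] at h0 ⊢
                obtain ⟨c', h1, h2⟩ := h0
                exact ⟨c', h1.trans (Nat.zero_le k), h2⟩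
      | succ m ih =>
        intro c hc
        have hex : ∃ j, 0 < c j := by
          by_contra hcon
          push_neg at hcon
          simp only [Nat.le_zero] at hcon
          simp [hcon] at hc
        obtain ⟨j, hj⟩ := hex
        set c' : Fin n → ℕ := fun i => c i - if i = j then 1 else 0 with hc'
        have hsum : (∑ i, c' i) = m := by
          have heq : ∑ i, c' i + ∑ i, (if i = j then 1 else 0) = ∑ i, c i := by
            rw [← Finset.sum_add_distrib]
            refine Finset.sum_congr rfl fun i _ => ?_
            simp only [hc']
            rcases eq_or_ne i j with rfl | hij
            · simp; omega
            · simp [hij]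
          rw [Finset.sum_ite_eq' Finset.univ j (fun _ => 1)] at heq
          simp only [Finset.mem_univ, if_true] at heq
          omega
        have hval : (∑ i, c i * q i) = (∑ i, c' i * q i) + q j := by
          have hpt : ∀ i, c i * q i = c' i * q i + (if i = j then q i else 0) := by
            intro i
            rcases eq_or_ne i j with rfl | hij
            · have hcc : c i = c' i + 1 := by simp [hc']; omega
              rw [hcc, if_pos rfl]; ring
            · simp [hc', hij]
          rw [Finset.sum_congr rfl fun i _ => hpt i, Finset.sum_add_distrib,
            Finset.sum_ite_eq' Finset.univ j q]
          simp
        rw [hval, Nat.cast_add]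
        exact hclosed _ (ih c' hsum) j
    obtain ⟨c₀, hc₀⟩ := hone
    apply Finset.eq_univ_of_forall
    intro r
    have : ((∑ i, (ZMod.val r * c₀ i) * q i : ℕ) : ZMod a) = r := by
      have : (∑ i, (ZMod.val r * c₀ i) * q i) = ZMod.val r * ∑ i, c₀ i * q i := by
        rw [Finset.mul_sum]
        exact Finset.sum_congr rfl fun i _ => by ring
      rw [this, Nat.cast_mul, hc₀, mul_one, ZMod.natCast_val, ZMod.cast_id]
    have := hall _ (fun i => ZMod.val r * c₀ i) rfl
    rwa [‹((∑ i, (ZMod.val r * c₀ i) * q i : ℕ) : ZMod a) = r›] at this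
  -- cardinality growth
  have hcard : ∀ k, f k = Finset.univ ∨ k + 1 ≤ (f k).card := by
    intro k
    induction k with
    | zero => right; exact Finset.card_pos.mpr ⟨0, h0⟩
    | succ k ih =>
      rcases ih with h | h
      · left
        apply Finset.eq_univ_of_forall
        intro r; exact hmono k (h ▸ Finset.mem_univ r)
      · by_cases he : f (k + 1) = f k
        · left
          rw [he]; exact hstab k he
        · right
          have : f k ⊂ f (k + 1) := ssubset_of_subset_of_ne (hmono k) (Ne.symm he)
          have := Finset.card_lt_card this
          omega
  have hfin : f (a - 1) = Finset.univ := by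
    rcases hcard (a - 1) with h | h
    · exact h
    · have ha : 0 < a := Nat.pos_of_ne_zero (NeZero.ne a)
      have : a ≤ (f (a - 1)).card := by omega
      have hcardZ : Fintype.card (ZMod a) = a := ZMod.card a
      apply Finset.eq_univ_of_card
      rw [hcardZ]
      have hle := Finset.card_le_univ (f (a - 1))
      omega
  have : r ∈ f (a - 1) := hfin ▸ Finset.mem_univ r
  rwa [hmem] at this


lemma brauer_coprime {n : ℕ} (q : Fin n → ℕ) (hq : ∀ i, 0 < q i)
    (hne : (Finset.univ : Finset (Fin n)).Nonempty)
    (hg : Finset.univ.gcd q = 1) (y : ℕ)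
    (hy : (Finset.univ.inf' hne q - 1) * (Finset.univ.sup' hne q - 1) ≤ y) :
    ∃ c : Fin n → ℕ, y = ∑ i, c i * q i := by
  obtain ⟨i0, -, hi0⟩ := Finset.exists_mem_eq_inf' hne q
  obtain ⟨j0, -, hj0⟩ := Finset.exists_mem_eq_sup' hne q
  rw [hi0, hj0] at hy
  set a := q i0 with hadef
  set b := q j0 with hbdef
  rcases Nat.lt_or_ge a 2 with ha | ha
  · have ha1 : a = 1 := by have := hq i0; omega
    refine ⟨fun i => if i = i0 then y else 0, ?_⟩
    rw [Finset.sum_eq_single i0 (fun i _ hne' => by simp [hne'])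
      (fun hmm => absurd (Finset.mem_univ i0) hmm)]
    simp [← hadef, ha1]
  · haveI : NeZero a := ⟨by omega⟩
    obtain ⟨x, hx⟩ := finset_bezout Finset.univ q
    rw [hg] at hx
    have hone : ∃ c₀ : Fin n → ℕ, ((∑ i, c₀ i * q i : ℕ) : ZMod a) = 1 := by
      refine ⟨fun i => (x i % (a : ℤ)).toNat, ?_⟩
      have hcast : ∀ i, (((x i % (a : ℤ)).toNat : ℕ) : ZMod a) = ((x i : ℤ) : ZMod a) := by
        intro i
        have h1 : ((x i % (a : ℤ)).toNat : ℤ) = x i % (a : ℤ) :=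
          Int.toNat_of_nonneg (Int.emod_nonneg _ (by exact_mod_cast NeZero.ne a))
        calc (((x i % (a : ℤ)).toNat : ℕ) : ZMod a)
            = ((((x i % (a : ℤ)).toNat : ℤ)) : ZMod a) := by push_cast; ring
          _ = ((x i % (a : ℤ) : ℤ) : ZMod a) := by rw [h1]
          _ = ((x i : ℤ) : ZMod a) := by rw [ZMod.intCast_mod]
      push_cast
      rw [Finset.sum_congr rfl (fun i _ => by rw [hcast i])]
      have : (∑ i, ((x i : ℤ) : ZMod a) * (q i : ℕ)) = (((∑ i, x i * q i : ℤ)) : ZMod a) := by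
        push_cast; ring
      rw [this, hx]
      norm_num
    obtain ⟨c, hcle, hcr⟩ := exists_small_residue q hone ((y : ZMod a))
    set s := ∑ i, c i * q i with hs
    have hsb : s ≤ (a - 1) * b := by
      calc s ≤ ∑ i, c i * b := Finset.sum_le_sum
              (fun i _ => Nat.mul_le_mul_left _ (hj0 ▸ Finset.le_sup' q (Finset.mem_univ i)))
        _ = (∑ i, c i) * b := by rw [Finset.sum_mul]
        _ ≤ (a - 1) * b := Nat.mul_le_mul_right _ hcle
    have hmod : y ≡ s [MOD a] := ((ZMod.natCast_eq_natCast_iff _ _ _).mp hcr).symm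
    have hab : a ≤ b := hj0 ▸ Finset.le_sup' q (Finset.mem_univ i0)
    have hb1 : 1 ≤ b := hq j0
    have hexp : (a - 1) * b = (a - 1) * (b - 1) + (a - 1) := by
      conv_lhs => rw [show b = (b - 1) + 1 by omega]
      ring
    have hsy : s ≤ y := by
      by_contra hlt
      push_neg at hlt
      have hdvd : a ∣ s - y := (Nat.modEq_iff_dvd' (le_of_lt hlt)).mp hmod
      have h1 : 0 < s - y := by omega
      have h2 : s - y < a := by omega
      exact absurd (Nat.le_of_dvd h1 hdvd) (by omega)
    have hdvd : a ∣ y - s := (Nat.modEq_iff_dvd' hsy).mp hmod.symm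
    obtain ⟨t, ht⟩ := hdvd
    refine ⟨fun i => c i + if i = i0 then t else 0, ?_⟩
    have hsum : ∑ i, (c i + if i = i0 then t else 0) * q i = s + t * a := by
      simp only [add_mul]
      rw [Finset.sum_add_distrib]
      congr 1
      rw [Finset.sum_eq_single i0 (fun i _ hne' => by simp [hne'])
        (fun hmm => absurd (Finset.mem_univ i0) hmm)]
      simp [← hadef]
    rw [hsum]
    calc y = (y - s) + s := (Nat.sub_add_cancel hsy).symm
      _ = a * t + s := by rw [ht]
      _ = s + t * a := by ring

theorem stmt_2 (n : ℕ) (hn : 0 < n) (p : Fin n → ℕ) (hp : ∀ i, 0 < p i)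
    (h : ℕ) (hh : h = Finset.univ.gcd p)
    (hne : (Finset.univ : Finset (Fin n)).Nonempty)
    (y : ℕ)
    (hy : (Finset.univ.inf' hne p / h - 1) * (Finset.univ.sup' hne p / h - 1) ≤ y) :
    ∃ c : Fin n → ℕ, y * h = ∑ i, c i * p i := by
  have i1 : Fin n := ⟨0, hn⟩
  have hdvd : ∀ i, h ∣ p i := fun i => hh ▸ Finset.gcd_dvd (Finset.mem_univ i)
  have hpos : 0 < h := by
    rcases Nat.eq_zero_or_pos h with h0 | h0
    · exfalso
      have := hdvd i1
      rw [h0] at this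
      simp at this
      exact absurd this (Nat.pos_iff_ne_zero.mp (hp i1))
    · exact h0
  set q : Fin n → ℕ := fun i => p i / h with hqdef
  have hpq : ∀ i, p i = q i * h := fun i => (Nat.div_mul_cancel (hdvd i)).symm
  have hqpos : ∀ i, 0 < q i := fun i =>
    Nat.div_pos (Nat.le_of_dvd (hp i) (hdvd i)) hpos
  have hgq : Finset.univ.gcd q = 1 := by
    have hd1 : Finset.univ.gcd q * h ∣ h := by
      conv_rhs => rw [hh]
      exact Finset.dvd_gcd fun i _ => by
        rw [hpq i]
        exact mul_dvd_mul_right (Finset.gcd_dvd (Finset.mem_univ i)) h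
    have h2 : Finset.univ.gcd q * h ∣ 1 * h := by rwa [one_mul]
    exact Nat.dvd_one.mp ((Nat.mul_dvd_mul_iff_right hpos).mp h2)
  have hinf : Finset.univ.inf' hne p / h = Finset.univ.inf' hne q := by
    obtain ⟨j, -, hj⟩ := Finset.exists_mem_eq_inf' hne p
    rw [hj]
    refine le_antisymm ?_ ?_
    · apply Finset.le_inf'
      intro i _
      exact Nat.div_le_div_right (hj ▸ Finset.inf'_le p (Finset.mem_univ i))
    · exact Finset.inf'_le q (Finset.mem_univ j)
  have hsup : Finset.univ.sup' hne p / h = Finset.univ.sup' hne q := by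
    obtain ⟨j, -, hj⟩ := Finset.exists_mem_eq_sup' hne p
    rw [hj]
    refine le_antisymm ?_ ?_
    · exact Finset.le_sup' q (Finset.mem_univ j)
    · apply Finset.sup'_le
      intro i _
      exact Nat.div_le_div_right (hj ▸ Finset.le_sup' p (Finset.mem_univ i))
  rw [hinf, hsup] at hy
  obtain ⟨c, hc⟩ := brauer_coprime q hqpos hne hgq y hy
  refine ⟨c, ?_⟩
  rw [hc, Finset.sum_mul]
  exact Finset.sum_congr rfl fun i _ => by rw [hpq i, mul_assoc]
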